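/- In the Z/2Z-orbifold of the rank one Heisenberg vertex algebra H (generator α with OPE α(z)α(w) ~ (z-w)^{-2}, involution θ(α) = -α), the weight-6 normally ordered relation :ω_{0,0} ω_{1,1}: - :ω_{0,1} ω_{0,1}: = (7/6) ω_{3,1} - (1/12) ω_{4,0} holds, where ω_{i,j} = :(∂^i α)(∂^j α):. Consequently, ω_{4,0} can be expressed as a normally ordered polynomial in ω_{0,0}, ω_{2,0} and their derivatives: ω_{0,4} = -(2/5) :ω_{0,0} ∂²ω_{0,0}: + (4/5) :ω_{0,0} ω_{2,0}: + (1/5) :∂ω_{0,0} ∂ω_{0,0}: + (7/5) ∂²ω_{2,0} - (7/30) ∂⁴ω_{0,0}. -/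

import Mathlib

/-!
The first relation is computed with the quasi-associativity formula for `:(:ab:)c:`. By Wick's
theorem `(∂^i α)_{(m)}` acts on `ω_{k,l}` by contracting one factor, so all correction terms are
explicit multiples of `ω_{3,1}` and `ω_{4,0}`, and the two iterated products that remain agree
because `:∂α ω_{0,1}: = :α ω_{1,1}:`. For the second relation, expand the derivatives by the
Leibniz rule, use the symmetry `ω_{i,j} = ω_{j,i}` and subtract `4/5` of the first relation; the
`ω_{2,2}` terms cancel.
-/

/-- A (non-super) vertex algebra over a commutative ring `R`. -/
structure VertexAlg (R : Type) [CommRing R] (V : Type) [AddCommGroup V] [Module R V] where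
  mul : ℤ → V →ₗ[R] V →ₗ[R] V
  one : V
  trunc : ∀ a b : V, ∃ N : ℤ, ∀ n : ℤ, N ≤ n → mul n a b = 0
  vacuum_left : ∀ (n : ℤ) (a : V), mul n one a = if n = -1 then a else 0
  vacuum_create : ∀ a : V, mul (-1) a one = a
  vacuum_right : ∀ (n : ℤ), 0 ≤ n → ∀ a : V, mul n a one = 0
  deriv_mul : ∀ (n : ℤ) (a b : V), mul n (mul (-2) a one) b = (-n) • mul (n - 1) a b
  skew : ∀ (n : ℤ) (a b : V),
    mul n a b = ∑ᶠ p : ℤ, ((p + 1).negOnePow : ℤ) • mul (n - p - 1) (mul p b a) one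
  quasi_assoc : ∀ a b c : V,
    mul (-1) (mul (-1) a b) c - mul (-1) a (mul (-1) b c) =
      ∑ᶠ n : ℕ, (mul (-(n : ℤ) - 2) a (mul (n : ℤ) b c) +
        mul (-(n : ℤ) - 2) b (mul (n : ℤ) a c))
  non_comm : ∀ (n : ℕ) (a b c : V),
    mul (n : ℤ) a (mul (-1) b c) - mul (-1) (mul (n : ℤ) a b) c -
        mul (-1) b (mul (n : ℤ) a c) =
      ∑ i ∈ Finset.Icc 1 n, (n.choose i) • mul ((i : ℤ) - 1) (mul ((n : ℤ) - (i : ℤ)) a b) c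
  jacobi : ∀ (r s : ℕ) (a b c : V),
    mul (r : ℤ) a (mul (s : ℤ) b c) = mul (s : ℤ) b (mul (r : ℤ) a c) +
      ∑ i ∈ Finset.range (r + 1),
        (r.choose i) • mul ((r : ℤ) + (s : ℤ) - (i : ℤ)) (mul (i : ℤ) a b) c

/-- The translation operator `∂a = a_{(-2)}𝟙`. -/
def VertexAlg.D {R : Type} [CommRing R] {V : Type} [AddCommGroup V] [Module R V]
    (Va : VertexAlg R V) : V → V := fun a => Va.mul (-2) a Va.one

open Finset Nat

namespace VertexAlg

section CommRing

variable {R : Type} [CommRing R] {V : Type} [AddCommGroup V] [Module R V] (Va : VertexAlg R V)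

lemma mul_smul_left (n : ℤ) (c : R) (a b : V) : Va.mul n (c • a) b = c • Va.mul n a b := by
  rw [map_smul, LinearMap.smul_apply]

lemma mul_zero_left (n : ℤ) (b : V) : Va.mul n 0 b = 0 := by
  rw [map_zero, LinearMap.zero_apply]

lemma D_mul (n : ℤ) (a b : V) : Va.mul n (Va.D a) b = (-n : R) • Va.mul (n - 1) a b := by
  rw [D, Va.deriv_mul, ← Int.cast_smul_eq_zsmul R, Int.cast_neg]

def DLinear : Module.End R V := (Va.mul (-2)).flip Va.one

lemma iterate_D_eq_pow (k : ℕ) : Va.D^[k] = ⇑(Va.DLinear ^ k) := by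
  rw [Module.End.coe_pow]; rfl

lemma iterate_D_smul (k : ℕ) (c : R) (a : V) : Va.D^[k] (c • a) = c • Va.D^[k] a := by
  rw [iterate_D_eq_pow, map_smul]

lemma iterate_D_add (k : ℕ) (a b : V) : Va.D^[k] (a + b) = Va.D^[k] a + Va.D^[k] b := by
  rw [iterate_D_eq_pow, map_add]

lemma D_smul (c : R) (a : V) : Va.D (c • a) = c • Va.D a :=
  Va.iterate_D_smul 1 c a

lemma D_sum {ι : Type} (s : Finset ι) (f : ι → V) :
    Va.D (∑ i ∈ s, f i) = ∑ i ∈ s, Va.D (f i) :=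
  map_sum Va.DLinear f s

lemma D_one : Va.D Va.one = 0 := by
  simp [D, Va.vacuum_left]

lemma iterate_D_one (k : ℕ) : Va.D^[k + 1] Va.one = 0 := by
  rw [Function.iterate_succ_apply, D_one, iterate_D_eq_pow, map_zero]

lemma mul_wick_of_mul_eq_smul_one (a b c : V) (f : ℕ → R)
    (h : ∀ j : ℕ, Va.mul j a b = f j • Va.one) (m : ℕ) :
    Va.mul m a (Va.mul (-1) b c) = f m • c + Va.mul (-1) b (Va.mul m a c) := by
  have hcomm := Va.non_comm m a b c
  rw [sum_eq_zero fun i hi => ?_, h, mul_smul_left, Va.vacuum_left, if_pos rfl, sub_sub,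
    sub_eq_zero] at hcomm
  · exact hcomm
  · obtain ⟨hi1, him⟩ := mem_Icc.mp hi
    rw [show (m : ℤ) - i = ((m - i : ℕ) : ℤ) by omega, h, mul_smul_left, Va.vacuum_left,
      if_neg (by omega), smul_zero, smul_zero]

variable (R) in
def heisenbergCoeff (i j p : ℕ) : R :=
  if p = i + j + 1 then (-1) ^ i * ((i + j + 1)! : R) else 0

lemma heisenbergCoeff_succ_left (i j p : ℕ) :
    heisenbergCoeff R (i + 1) j (p + 1) = -((p : R) + 1) * heisenbergCoeff R i j p := by
  unfold heisenbergCoeff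
  split_ifs with h h'
  · subst h'
    rw [show i + 1 + j + 1 = i + j + 1 + 1 by ring, factorial_succ]
    push_cast
    ring
  all_goals first | omega | simp

lemma heisenbergCoeff_zero_succ (j p : ℕ) :
    heisenbergCoeff R 0 (j + 1) (p + 1) = ((p : R) + 1) * heisenbergCoeff R 0 j p := by
  unfold heisenbergCoeff
  split_ifs with h h'
  · subst h'
    rw [show 0 + (j + 1) + 1 = 0 + j + 1 + 1 by ring, factorial_succ]
    push_cast
    ring
  all_goals first | omega | simp

end CommRing

section Field

variable {R : Type} [Field R] [CharZero R] {V : Type} [AddCommGroup V] [Module R V]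
  (Va : VertexAlg R V)

lemma mul_neg_sub_one (k : ℕ) (a b : V) :
    Va.mul (-k - 1) a b = (k ! : R)⁻¹ • Va.mul (-1) (Va.D^[k] a) b := by
  induction k generalizing a with
  | zero => simp
  | succ k ih =>
    have h := Va.D_mul (-k - 1) a b
    rw [ih, ← Function.iterate_succ_apply, Int.cast_sub, Int.cast_neg, Int.cast_natCast,
      Int.cast_one, neg_sub', sub_neg_eq_add, neg_neg] at h
    have hk : ((k : R) + 1) ≠ 0 := Nat.cast_add_one_ne_zero k
    rw [show -((k + 1 : ℕ) : ℤ) - 1 = -k - 1 - 1 by push_cast; ring, factorial_succ,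
      (eq_inv_smul_iff₀ hk).mpr h.symm, smul_smul]
    push_cast
    rw [mul_inv]

lemma mul_neg_sub_one_one (k : ℕ) (a : V) :
    Va.mul (-k - 1) a Va.one = (k ! : R)⁻¹ • Va.D^[k] a := by
  rw [mul_neg_sub_one, Va.vacuum_create]

lemma mul_eq_sum_iterate_D (n : ℤ) (a b : V) (K : ℕ)
    (hK : ∀ k : ℕ, K ≤ k → Va.mul (n + k) b a = 0) :
    Va.mul n a b = ∑ k ∈ range K,
      (((n + k + 1).negOnePow : R) * (k ! : R)⁻¹) • Va.D^[k] (Va.mul (n + k) b a) := by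
  let shift : ℕ ↪ ℤ := Nat.castEmbedding.trans (addLeftEmbedding n)
  rw [Va.skew n a b, finsum_eq_sum_of_support_subset (s := (range K).map shift) _ ?_, sum_map]
  · refine sum_congr rfl fun k _ => ?_
    rw [show shift k = n + k from rfl, show n - (n + k) - 1 = -k - 1 by ring, mul_neg_sub_one_one,
      ← Int.cast_smul_eq_zsmul R, smul_smul]
  · refine Function.support_subset_iff'.mpr fun p hp => ?_
    rcases lt_or_ge p n with hpn | hnp
    · rw [Va.vacuum_right _ (by omega), smul_zero]
    · obtain ⟨k, rfl⟩ : ∃ k : ℕ, p = n + k := ⟨(p - n).toNat, by omega⟩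
      have hk : K ≤ k := by
        by_contra h
        exact hp (mem_map_of_mem shift (mem_range.mpr (by omega)))
      rw [hK k hk, mul_zero_left, smul_zero]

lemma mul_D_right (n : ℤ) (a b : V) :
    Va.mul n a (Va.D b) = Va.D (Va.mul n a b) + (n : R) • Va.mul (n - 1) a b := by
  obtain ⟨N, hN⟩ := Va.trunc b a
  set K := (N - n).toNat
  rw [Va.mul_eq_sum_iterate_D n a (Va.D b) (K + 1) fun k hk => by
      rw [D_mul, hN _ (by omega), smul_zero],
    Va.mul_eq_sum_iterate_D n a b K fun k hk => hN _ (by omega),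
    Va.mul_eq_sum_iterate_D (n - 1) a b (K + 1) fun k hk => hN _ (by omega),
    sum_range_succ', sum_range_succ', smul_add, smul_sum, D_sum, ← add_assoc, ← sum_add_distrib]
  congr 1
  · refine sum_congr rfl fun k _ => ?_
    rw [D_mul, show n + ((k + 1 : ℕ) : ℤ) - 1 = n + k by push_cast; ring,
      show n - 1 + ((k + 1 : ℕ) : ℤ) = n + k by push_cast; ring,
      show n + ((k + 1 : ℕ) : ℤ) + 1 = n + k + 1 + 1 by push_cast; ring, Int.negOnePow_succ,
      iterate_D_smul, D_smul, ← Function.iterate_succ_apply' Va.D, smul_smul, smul_smul,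
      ← add_smul]
    congr 1
    push_cast [factorial_succ]
    field_simp
    ring
  · rw [D_mul]
    simp only [CharP.cast_eq_zero, add_zero, sub_add_cancel, Int.negOnePow_succ,
      Function.iterate_zero_apply, factorial_zero, cast_one, inv_one, mul_one, smul_smul]
    congr 1
    push_cast
    ring

lemma D_wick (a b : V) :
    Va.D (Va.mul (-1) a b) = Va.mul (-1) (Va.D a) b + Va.mul (-1) a (Va.D b) := by
  rw [mul_D_right, D_mul]
  norm_num

lemma iterate_D_wick (n : ℕ) (a b : V) :
    Va.D^[n] (Va.mul (-1) a b) =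
      ∑ k ∈ range (n + 1), n.choose k • Va.mul (-1) (Va.D^[k] a) (Va.D^[n - k] b) := by
  induction n with
  | zero => simp
  | succ n ih =>
    rw [Function.iterate_succ_apply', ih, D_sum,
      sum_choose_succ_nsmul (fun i j => Va.mul (-1) (Va.D^[i] a) (Va.D^[j] b)),
      ← sum_add_distrib]
    refine sum_congr rfl fun k hk => ?_
    rw [show n + 1 - k = n - k + 1 by have := mem_range.mp hk; omega, ← nsmul_add,
      ← Nat.cast_smul_eq_nsmul R, ← Nat.cast_smul_eq_nsmul R, D_smul, D_wick, add_comm,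
      ← Function.iterate_succ_apply' Va.D, ← Function.iterate_succ_apply' Va.D]

lemma wick_comm (a b : V) (N : ℕ) (hN : ∀ p : ℕ, N ≤ p → Va.mul p b a = 0) :
    Va.mul (-1) a b = Va.mul (-1) b a +
      ∑ p ∈ range N, ((-1 : R) ^ (p + 1) * ((p + 1)! : R)⁻¹) • Va.D^[p + 1] (Va.mul p b a) := by
  rw [Va.mul_eq_sum_iterate_D (-1) a b (N + 1) fun k hk => by
      rw [show -1 + (k : ℤ) = ((k - 1 : ℕ) : ℤ) by omega]; exact hN _ (by omega),
    sum_range_succ', add_comm]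
  congr 1
  · simp
  · refine sum_congr rfl fun p _ => ?_
    rw [show -1 + ((p + 1 : ℕ) : ℤ) = p by push_cast; ring,
      show (p : ℤ) + 1 = ((p + 1 : ℕ) : ℤ) by push_cast; ring, Int.cast_negOnePow_natCast]

lemma wick_comm_of_mul_eq_smul_one (a b : V) (f : ℕ → R)
    (h : ∀ p : ℕ, Va.mul p b a = f p • Va.one) :
    Va.mul (-1) a b = Va.mul (-1) b a := by
  obtain ⟨N, hN⟩ := Va.trunc b a
  rw [Va.wick_comm a b N.toNat fun p hp => hN p (by omega), sum_eq_zero, add_zero]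
  intro p _
  rw [h, iterate_D_smul, iterate_D_one, smul_zero, smul_zero]

lemma wick_assoc (a b c : V) (N : ℕ) (ha : ∀ n : ℕ, N ≤ n → Va.mul n a c = 0)
    (hb : ∀ n : ℕ, N ≤ n → Va.mul n b c = 0) :
    Va.mul (-1) (Va.mul (-1) a b) c = Va.mul (-1) a (Va.mul (-1) b c) +
      ∑ n ∈ range N, ((n + 1)! : R)⁻¹ •
        (Va.mul (-1) (Va.D^[n + 1] a) (Va.mul n b c) +
          Va.mul (-1) (Va.D^[n + 1] b) (Va.mul n a c)) := by
  rw [← sub_eq_iff_eq_add', Va.quasi_assoc,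
    finsum_eq_sum_of_support_subset (s := range N) _ (Function.support_subset_iff'.mpr ?_)]
  · refine sum_congr rfl fun n _ => ?_
    rw [show -(n : ℤ) - 2 = -((n + 1 : ℕ) : ℤ) - 1 by push_cast; ring, mul_neg_sub_one,
      mul_neg_sub_one, smul_add]
  · intro n hn
    simp only [coe_range, Set.mem_Iio, not_lt] at hn
    rw [ha n hn, hb n hn, map_zero, map_zero, add_zero]

section Heisenberg

variable (α : V) (hα1 : Va.mul 1 α α = Va.one)
  (hα0 : ∀ n : ℤ, 0 ≤ n → n ≠ 1 → Va.mul n α α = 0)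
include hα1 hα0

local notation "ω" i:max j:max => Va.mul (-1) (Va.D^[i] α) (Va.D^[j] α)

lemma mul_iterate_D_of_heisenberg (j m : ℕ) :
    Va.mul m α (Va.D^[j] α) = heisenbergCoeff R 0 j m • Va.one := by
  induction j generalizing m with
  | zero =>
    rcases eq_or_ne m 1 with rfl | hm
    · simp [heisenbergCoeff, hα1]
    · rw [Function.iterate_zero_apply, hα0 m (by omega) (by omega), heisenbergCoeff,
        if_neg (by omega), zero_smul]
  | succ j ih =>
    rw [Function.iterate_succ_apply', mul_D_right, ih, D_smul, D_one, smul_zero, zero_add]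
    cases m with
    | zero => simp [heisenbergCoeff]
    | succ m =>
      rw [show ((m + 1 : ℕ) : ℤ) - 1 = m by push_cast; ring, ih, smul_smul,
        heisenbergCoeff_zero_succ]
      push_cast
      rfl

lemma iterate_D_mul_iterate_D_of_heisenberg (i j p : ℕ) :
    Va.mul p (Va.D^[i] α) (Va.D^[j] α) = heisenbergCoeff R i j p • Va.one := by
  induction i generalizing p with
  | zero => exact Va.mul_iterate_D_of_heisenberg α hα1 hα0 j p
  | succ i ih =>
    rw [Function.iterate_succ_apply', D_mul]
    cases p with
    | zero => simp [heisenbergCoeff]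
    | succ p =>
      rw [show ((p + 1 : ℕ) : ℤ) - 1 = p by push_cast; ring, ih, smul_smul,
        heisenbergCoeff_succ_left]
      push_cast
      rfl

lemma omega_comm (i j : ℕ) : (ω i j) = ω j i :=
  Va.wick_comm_of_mul_eq_smul_one _ _ (heisenbergCoeff R j i)
    (Va.iterate_D_mul_iterate_D_of_heisenberg α hα1 hα0 j i)

lemma iterate_D_mul_omega (i k l m : ℕ) :
    Va.mul m (Va.D^[i] α) (ω k l) =
      heisenbergCoeff R i k m • Va.D^[l] α + heisenbergCoeff R i l m • Va.D^[k] α := by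
  rw [Va.mul_wick_of_mul_eq_smul_one _ _ _ (heisenbergCoeff R i k)
      (Va.iterate_D_mul_iterate_D_of_heisenberg α hα1 hα0 i k),
    Va.iterate_D_mul_iterate_D_of_heisenberg α hα1 hα0, map_smul, Va.vacuum_create]

lemma iterate_D_mul_omega_eq_zero {i k l m : ℕ} (hk : i + k + 1 < m) (hl : i + l + 1 < m) :
    Va.mul m (Va.D^[i] α) (ω k l) = 0 := by
  rw [Va.iterate_D_mul_omega α hα1 hα0, heisenbergCoeff, heisenbergCoeff, if_neg (by omega),
    if_neg (by omega), zero_smul, zero_smul, add_zero]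

lemma wick_omega00_omega11 :
    Va.mul (-1) (ω 0 0) (ω 1 1) =
      Va.mul (-1) (Va.D^[0] α) (Va.mul (-1) (Va.D^[0] α) (ω 1 1)) + (4 / 3 : R) • ω 3 1 := by
  have hvan : ∀ n : ℕ, 3 ≤ n → Va.mul n (Va.D^[0] α) (ω 1 1) = 0 := fun n hn =>
    Va.iterate_D_mul_omega_eq_zero α hα1 hα0 (by omega) (by omega)
  rw [Va.wick_assoc _ _ _ 3 hvan hvan]
  simp only [sum_range_succ, sum_range_zero, Va.iterate_D_mul_omega α hα1 hα0,
    ← Function.iterate_add_apply, map_add, map_smul]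
  norm_num only [heisenbergCoeff, if_true, if_false]
  module

lemma wick_D_alpha_omega01 :
    Va.mul (-1) (Va.D^[1] α) (ω 0 1) = Va.mul (-1) (Va.D^[0] α) (ω 1 1) := by
  have hvan : ∀ n : ℕ, 3 ≤ n → Va.mul n (Va.D^[1] α) (Va.D^[0] α) = 0 := fun n hn => by
    rw [Va.iterate_D_mul_iterate_D_of_heisenberg α hα1 hα0, heisenbergCoeff, if_neg (by omega),
      zero_smul]
  -- Expand `:ω_{1,1} α:` by quasi-associativity and by skew-symmetry: both corrections are
  -- `-(2/3) ∂⁴α`.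
  have hassoc := Va.wick_assoc _ _ _ 3 hvan hvan
  have hcomm := Va.wick_comm (ω 1 1) (Va.D^[0] α) 3 fun n hn =>
    Va.iterate_D_mul_omega_eq_zero α hα1 hα0 (by omega) (by omega)
  simp only [sum_range_succ, sum_range_zero, Va.iterate_D_mul_omega α hα1 hα0,
    Va.iterate_D_mul_iterate_D_of_heisenberg α hα1 hα0, map_smul, iterate_D_add,
    iterate_D_smul, ← Function.iterate_add_apply, Va.vacuum_create] at hassoc hcomm
  norm_num only [heisenbergCoeff, if_true, if_false] at hassoc hcomm
  rw [Va.omega_comm α hα1 hα0 0 1]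
  linear_combination (norm := module) hcomm - hassoc

lemma wick_omega01_omega01 :
    Va.mul (-1) (ω 0 1) (ω 0 1) =
      Va.mul (-1) (Va.D^[0] α) (Va.mul (-1) (Va.D^[1] α) (ω 0 1)) +
        (1 / 6 : R) • ω 3 1 + (1 / 12 : R) • ω 4 0 := by
  rw [Va.wick_assoc _ _ _ 4
    (fun n hn => Va.iterate_D_mul_omega_eq_zero α hα1 hα0 (by omega) (by omega))
    (fun n hn => Va.iterate_D_mul_omega_eq_zero α hα1 hα0 (by omega) (by omega))]
  simp only [sum_range_succ, sum_range_zero, Va.iterate_D_mul_omega α hα1 hα0,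
    ← Function.iterate_add_apply, map_add, map_smul]
  norm_num only [heisenbergCoeff, if_true, if_false]
  module

theorem wick_omega00_omega11_sub_wick_omega01_omega01 :
    Va.mul (-1) (ω 0 0) (ω 1 1) - Va.mul (-1) (ω 0 1) (ω 0 1) =
      (7 / 6 : R) • ω 3 1 - (1 / 12 : R) • ω 4 0 := by
  rw [Va.wick_omega00_omega11 α hα1 hα0, Va.wick_omega01_omega01 α hα1 hα0,
    Va.wick_D_alpha_omega01 α hα1 hα0]
  module

theorem omega04_eq :
    (ω 0 4) =
      -(2 / 5 : R) • Va.mul (-1) (ω 0 0) (Va.D^[2] (ω 0 0)) +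
        (4 / 5 : R) • Va.mul (-1) (ω 0 0) (ω 2 0) +
        (1 / 5 : R) • Va.mul (-1) (Va.D (ω 0 0)) (Va.D (ω 0 0)) +
        (7 / 5 : R) • Va.D^[2] (ω 2 0) -
        (7 / 30 : R) • Va.D^[4] (ω 0 0) := by
  have hrel := Va.wick_omega00_omega11_sub_wick_omega01_omega01 α hα1 hα0
  rw [show Va.D (ω 0 0) = Va.D^[1] (ω 0 0) from rfl]
  simp only [iterate_D_wick, sum_range_succ, sum_range_zero, ← Function.iterate_add_apply,
    Nat.choose, zero_add]
  rw [Va.omega_comm α hα1 hα0 0 4, Va.omega_comm α hα1 hα0 1 3, Va.omega_comm α hα1 hα0 0 2,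
    Va.omega_comm α hα1 hα0 1 0]
  simp only [map_add, map_nsmul, LinearMap.add_apply, LinearMap.smul_apply]
  linear_combination (norm := module) (4 / 5 : R) • hrel

end Heisenberg

end Field

end VertexAlg

theorem heisenberg_weight_six_decoupling_relation
    (V : Type) [AddCommGroup V] [Module ℂ V] (Va : VertexAlg ℂ V)
    (α : V)
    -- the Heisenberg OPE `α(z)α(w) ~ (z-w)^{-2}`:
    (hα1 : Va.mul 1 α α = Va.one)
    (hα0 : ∀ n : ℤ, 0 ≤ n → n ≠ 1 → Va.mul n α α = 0) :
    -- `ω_{i,j} = :(∂^i α)(∂^j α):`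
    let ω : ℕ → ℕ → V := fun i j => Va.mul (-1) (Va.D^[i] α) (Va.D^[j] α)
    Va.mul (-1) (ω 0 0) (ω 1 1) - Va.mul (-1) (ω 0 1) (ω 0 1) =
        (7 / 6 : ℂ) • ω 3 1 - (1 / 12 : ℂ) • ω 4 0 ∧
    ω 0 4 =
      -(2 / 5 : ℂ) • Va.mul (-1) (ω 0 0) (Va.D^[2] (ω 0 0)) +
        (4 / 5 : ℂ) • Va.mul (-1) (ω 0 0) (ω 2 0) +
        (1 / 5 : ℂ) • Va.mul (-1) (Va.D (ω 0 0)) (Va.D (ω 0 0)) +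
        (7 / 5 : ℂ) • Va.D^[2] (ω 2 0) -
        (7 / 30 : ℂ) • Va.D^[4] (ω 0 0) := by
  intro ω
  exact ⟨Va.wick_omega00_omega11_sub_wick_omega01_omega01 α hα1 hα0, Va.omega04_eq α hα1 hα0⟩
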